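/- arXiv:0804.1936 — 2 statements merged into one kernel-verified Lean document; each statement's English description precedes it below -/
import Mathlib

section
/- If Ψ is a random unitary channel on a finite-dimensional Hilbert space A (i.e. Ψ(X) = ∑_i p_i U_i X U_i* for unitaries U_i and a probability distribution p_i), then for any unitarily invariant norm |||·||| on operators on A ⊗ B and any density operator ρ on A ⊗ B, |||(Ψ ⊗ id_B)(ρ) − (I_A/dim A) ⊗ Tr_A ρ||| ≤ |||ρ − (I_A/dim A) ⊗ Tr_A ρ|||. -/
open Matrix
open scoped Kronecker ComplexOrder

/-- Partial trace over the first tensor factor. -/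
noncomputable def ptraceA {a b : Type*} [Fintype a] (M : Matrix (a × b) (a × b) ℂ) :
    Matrix b b ℂ := fun i j => ∑ x : a, M (x, i) (x, j)

/-- A density operator: positive semidefinite with unit trace. -/
def IsDensity {n : Type*} [Fintype n] (ρ : Matrix n n ℂ) : Prop :=
  ρ.PosSemidef ∧ ρ.trace = 1

/-!
The unitaries `U i ⊗ I_B` implementing `Ψ ⊗ id` commute with `σ = (I_A / dim A) ⊗ Tr_A ρ`,
so `σ` is a fixed point of `Ψ ⊗ id` and, by linearity, `(Ψ ⊗ id)(ρ) - σ = (Ψ ⊗ id)(ρ - σ)`.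
Any random unitary channel contracts a unitarily invariant norm: by the triangle inequality,
homogeneity and invariance, `|||∑ pᵢ Wᵢ X Wᵢ*||| ≤ ∑ pᵢ |||X||| = |||X|||`.
-/

theorem Commute.mul_mul_star_eq {M : Type*} [Monoid M] [StarMul M] {W X : M}
    (hW : W ∈ unitary M) (h : Commute W X) : W * X * star W = X := by
  rw [h.eq, mul_assoc, Unitary.mul_star_self_of_mem hW, mul_one]

theorem Matrix.commute_kronecker_one_one_kronecker {R m n : Type*} [CommSemiring R]
    [Fintype m] [DecidableEq m] [Fintype n] [DecidableEq n]
    (A : Matrix m m R) (B : Matrix n n R) :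
    Commute (A ⊗ₖ (1 : Matrix n n R)) ((1 : Matrix m m R) ⊗ₖ B) := by
  simp only [Commute, SemiconjBy, ← mul_kronecker_mul, mul_one, one_mul]

section RandomUnitaryChannel

variable {n ι : Type*} [Fintype n] [Fintype ι]

noncomputable def randomUnitaryChannel (p : ι → ℝ) (W : ι → Matrix n n ℂ)
    (X : Matrix n n ℂ) : Matrix n n ℂ :=
  ∑ i, (p i : ℂ) • (W i * X * (W i)ᴴ)

theorem randomUnitaryChannel_sub (p : ι → ℝ) (W : ι → Matrix n n ℂ) (X Y : Matrix n n ℂ) :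
    randomUnitaryChannel p W (X - Y) =
      randomUnitaryChannel p W X - randomUnitaryChannel p W Y := by
  simp only [randomUnitaryChannel, Matrix.mul_sub, Matrix.sub_mul, smul_sub,
    Finset.sum_sub_distrib]

theorem randomUnitaryChannel_eq_self_of_commute [DecidableEq n] {p : ι → ℝ} {W : ι → Matrix n n ℂ}
    (hp1 : ∑ i, p i = 1) (hW : ∀ i, W i ∈ unitaryGroup n ℂ) {X : Matrix n n ℂ}
    (hX : ∀ i, Commute (W i) X) : randomUnitaryChannel p W X = X := by
  have hp1' : ∑ i, (p i : ℂ) = 1 := by exact_mod_cast hp1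
  simp only [randomUnitaryChannel, ← star_eq_conjTranspose, (hX _).mul_mul_star_eq (hW _),
    ← Finset.sum_smul, hp1', one_smul]

theorem apply_randomUnitaryChannel_le [DecidableEq n] (f : Matrix n n ℂ → ℝ)
    (hadd : ∀ X Y, f (X + Y) ≤ f X + f Y)
    (hsmul : ∀ (c : ℂ) (X), f (c • X) = ‖c‖ * f X)
    (hinv : ∀ U V X, U ∈ unitaryGroup n ℂ → V ∈ unitaryGroup n ℂ → f (U * X * V) = f X)
    {p : ι → ℝ} {W : ι → Matrix n n ℂ} (hp : ∀ i, 0 ≤ p i) (hp1 : ∑ i, p i = 1)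
    (hW : ∀ i, W i ∈ unitaryGroup n ℂ) (X : Matrix n n ℂ) :
    f (randomUnitaryChannel p W X) ≤ f X := by
  have hzero : f 0 = 0 := by simpa using hsmul 0 0
  calc f (randomUnitaryChannel p W X)
      ≤ ∑ i, f ((p i : ℂ) • (W i * X * (W i)ᴴ)) :=
        Finset.le_sum_of_subadditive f hzero.le hadd _ _
    _ = ∑ i, p i * f X := by
        refine Finset.sum_congr rfl fun i _ => ?_
        rw [hsmul, Complex.norm_real, Real.norm_of_nonneg (hp i), ← star_eq_conjTranspose,
          hinv _ _ _ (hW i) (Unitary.star_mem (hW i))]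
    _ = f X := by rw [← Finset.sum_mul, hp1, one_mul]

end RandomUnitaryChannel

theorem random_unitary_does_not_increase_distance_to_mixed_general
    {a b : Type*} [Fintype a] [DecidableEq a] [Fintype b] [DecidableEq b]
    (f : Matrix (a × b) (a × b) ℂ → ℝ)
    (hadd : ∀ X Y, f (X + Y) ≤ f X + f Y)
    (hsmul : ∀ (c : ℂ) (X), f (c • X) = ‖c‖ * f X)
    (hinv : ∀ U V X, U ∈ Matrix.unitaryGroup (a × b) ℂ → V ∈ Matrix.unitaryGroup (a × b) ℂ →
      f (U * X * V) = f X)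
    (nu : ℕ) (p : Fin nu → ℝ) (U : Fin nu → Matrix a a ℂ)
    (hp : ∀ i, 0 ≤ p i) (hp1 : ∑ i, p i = 1)
    (hU : ∀ i, U i ∈ Matrix.unitaryGroup a ℂ)
    (ρ : Matrix (a × b) (a × b) ℂ) :
    f ((∑ i, (p i : ℂ) •
          ((U i ⊗ₖ (1 : Matrix b b ℂ)) * ρ * (U i ⊗ₖ (1 : Matrix b b ℂ))ᴴ))
        - ((1 : ℂ) / (Fintype.card a : ℂ)) • ((1 : Matrix a a ℂ) ⊗ₖ ptraceA ρ))
      ≤ f (ρ - ((1 : ℂ) / (Fintype.card a : ℂ)) • ((1 : Matrix a a ℂ) ⊗ₖ ptraceA ρ)) := by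
  set σ := ((1 : ℂ) / (Fintype.card a : ℂ)) • ((1 : Matrix a a ℂ) ⊗ₖ ptraceA ρ)
  set W : Fin nu → Matrix (a × b) (a × b) ℂ := fun i => U i ⊗ₖ (1 : Matrix b b ℂ)
  have hW : ∀ i, W i ∈ unitaryGroup (a × b) ℂ := fun i => kronecker_mem_unitary (hU i) (one_mem _)
  have hσ : randomUnitaryChannel p W σ = σ :=
    randomUnitaryChannel_eq_self_of_commute hp1 hW fun i =>
      (commute_kronecker_one_one_kronecker (U i) (ptraceA ρ)).smul_right _
  calc f (randomUnitaryChannel p W ρ - σ) = f (randomUnitaryChannel p W (ρ - σ)) := by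
        rw [randomUnitaryChannel_sub, hσ]
    _ ≤ f (ρ - σ) := apply_randomUnitaryChannel_le f hadd hsmul hinv hp hp1 hW _

/-- If `Ψ` is a random unitary channel on `A` (given by unitaries `U i` with probabilities
`p i`), then for any unitarily invariant norm `f` on operators on `A ⊗ B` and any density
operator `ρ` on `A ⊗ B`, applying `Ψ ⊗ id` cannot increase the distance to
`(I_A / dim A) ⊗ Tr_A ρ`. -/
theorem random_unitary_does_not_increase_distance_to_mixed
    {a b : Type*} [Fintype a] [DecidableEq a] [Fintype b] [DecidableEq b]
    (f : Matrix (a × b) (a × b) ℂ → ℝ)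
    (hadd : ∀ X Y, f (X + Y) ≤ f X + f Y)
    (hsmul : ∀ (c : ℂ) (X), f (c • X) = ‖c‖ * f X)
    (hinv : ∀ U V X, U ∈ Matrix.unitaryGroup (a × b) ℂ → V ∈ Matrix.unitaryGroup (a × b) ℂ →
      f (U * X * V) = f X)
    (nu : ℕ) (p : Fin nu → ℝ) (U : Fin nu → Matrix a a ℂ)
    (hp : ∀ i, 0 ≤ p i) (hp1 : ∑ i, p i = 1)
    (hU : ∀ i, U i ∈ Matrix.unitaryGroup a ℂ)
    (ρ : Matrix (a × b) (a × b) ℂ) (hρ : IsDensity ρ) :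
    f ((∑ i, (p i : ℂ) •
          ((U i ⊗ₖ (1 : Matrix b b ℂ)) * ρ * (U i ⊗ₖ (1 : Matrix b b ℂ))ᴴ))
        - ((1 : ℂ) / (Fintype.card a : ℂ)) • ((1 : Matrix a a ℂ) ⊗ₖ ptraceA ρ))
      ≤ f (ρ - ((1 : ℂ) / (Fintype.card a : ℂ)) • ((1 : Matrix a a ℂ) ⊗ₖ ptraceA ρ)) :=
  random_unitary_does_not_increase_distance_to_mixed_general f hadd hsmul hinv nu p U hp hp1 hU ρ
end

section
/- With Φ' as constructed from Φ, if dim A ≥ dim H, m = log₂(dim A) ≥ 3, and ρ is a density operator supported on S_0⊥, then S(Φ'(ρ)) ≥ log₂(dim A · dim H) − m/2^{m−3}. -/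
open Matrix
open scoped Kronecker ComplexOrder

/-- Partial trace over the second tensor factor. -/
noncomputable def ptraceB {k b : Type*} [Fintype b] (M : Matrix (k × b) (k × b) ℂ) :
    Matrix k k ℂ := fun i j => ∑ y : b, M (i, y) (j, y)

variable {h k a b : Type*}
  [Fintype h] [DecidableEq h] [Fintype k] [DecidableEq k]
  [Fintype a] [DecidableEq a] [Fintype b] [DecidableEq b]

/-- Projection onto the subspace `S₀ = |0⟩ ⊗ H` of `A ⊗ H`. -/
noncomputable def projS0 (a0 : a) : Matrix (a × h) (a × h) ℂ :=
  Matrix.single a0 a0 1 ⊗ₖ (1 : Matrix h h ℂ)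

/-- The dephasing channel between `S₀` and `S₀⊥`. -/
noncomputable def Dchan (a0 : a) (ρ : Matrix (a × h) (a × h) ℂ) :
    Matrix (a × h) (a × h) ℂ :=
  projS0 a0 * ρ * projS0 a0 + (1 - projS0 a0) * ρ * (1 - projS0 a0)

/-- The conditional mixing channel: identity on `S₀`, complete depolarization on `S₀⊥`. -/
noncomputable def Mchan (a0 : a) (ρ : Matrix (a × h) (a × h) ℂ) :
    Matrix (a × h) (a × h) ℂ :=
  projS0 a0 * ρ * projS0 a0 +
    (((1 - projS0 a0 (h := h)) * ρ).trace *
      ((1 : ℂ) / (((Fintype.card a : ℂ) - 1) * (Fintype.card h : ℂ)))) •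
      (((1 : Matrix a a ℂ) - Matrix.single a0 a0 1) ⊗ₖ (1 : Matrix h h ℂ))

/-- The channel `N_B` replacing the `B` factor by the maximally mixed state. -/
noncomputable def Nchan (ρ : Matrix (k × b) (k × b) ℂ) : Matrix (k × b) (k × b) ℂ :=
  ((1 : ℂ) / (Fintype.card b : ℂ)) • (ptraceB ρ ⊗ₖ (1 : Matrix b b ℂ))

/-- The channel `Φ` with Stinespring dilation `Φ(σ) = Tr_B (U (|0⟩⟨0| ⊗ σ) U*)`. -/
noncomputable def PhiChan (a0 : a) (U : Matrix (k × b) (a × h) ℂ)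
    (σ : Matrix h h ℂ) : Matrix k k ℂ :=
  ptraceB (U * (Matrix.single a0 a0 1 ⊗ₖ σ) * Uᴴ)

/-- The random unitary approximation `Φ'(ρ) = N_B (U ((M ∘ D)(ρ)) U*)`. -/
noncomputable def PhiPrime (a0 : a) (U : Matrix (k × b) (a × h) ℂ)
    (ρ : Matrix (a × h) (a × h) ℂ) : Matrix (k × b) (k × b) ℂ :=
  Nchan (U * Mchan a0 (Dchan a0 ρ) * Uᴴ)


/-- The von Neumann entropy (in bits) of a matrix, via its eigenvalues. -/
noncomputable def vnEntropy {n : Type*} [Fintype n] [DecidableEq n]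
    (ρ : Matrix n n ℂ) : ℝ :=
  if h : ρ.IsHermitian then (∑ i, Real.negMulLog (h.eigenvalues i)) / Real.log 2 else 0

/-! On `S₀⊥` the dephasing `D` acts trivially and the conditional mixing `M` sends `ρ` to the
maximally mixed state `Q / N` on `S₀⊥`, where `Q = 1 - P_{S₀}` and `N = (dim A - 1) dim H`.
Hence `Φ'(ρ) = N⁻¹ N_B (U Q U*)`, and as `U Q U* ≤ 1` while `N_B` is positive and unital,
`Φ'(ρ) ≤ N⁻¹`: every eigenvalue is at most `N⁻¹`, so `S(Φ'(ρ)) ≥ log₂ N`. The remaining loss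
`log₂ (dim A / (dim A - 1))` is elementary to bound by `m / 2^(m-3)`. -/

open scoped MatrixOrder

lemma nonempty_of_trace_ne_zero {n R : Type*} [Fintype n] [AddCommMonoid R] {M : Matrix n n R}
    (hM : M.trace ≠ 0) : Nonempty n := by
  by_contra hn
  rw [not_nonempty_iff] at hn
  exact hM (by simp [Matrix.trace])

section PartialTrace

variable {m n : Type*} [Fintype n]

lemma ptraceB_eq_sum_submatrix (M : Matrix (m × n) (m × n) ℂ) :
    ptraceB M = ∑ y, M.submatrix (·, y) (·, y) := by
  ext i j
  simp [ptraceB, Matrix.sum_apply]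

lemma posSemidef_ptraceB {M : Matrix (m × n) (m × n) ℂ} (hM : M.PosSemidef) :
    (ptraceB M).PosSemidef := by
  rw [ptraceB_eq_sum_submatrix]
  exact posSemidef_sum _ fun y _ => hM.submatrix _

lemma trace_ptraceB [Fintype m] (M : Matrix (m × n) (m × n) ℂ) :
    (ptraceB M).trace = M.trace := by
  simp [ptraceB, Matrix.trace, Fintype.sum_prod_type]

variable [DecidableEq n]

lemma Nchan_sub (X Y : Matrix (m × n) (m × n) ℂ) :
    Nchan (X - Y) = Nchan X - Nchan Y := by
  ext ⟨i, y⟩ ⟨j, y'⟩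
  simp [Nchan, ptraceB, Finset.sum_sub_distrib, sub_mul, mul_sub]

lemma Nchan_smul (c : ℂ) (X : Matrix (m × n) (m × n) ℂ) :
    Nchan (c • X) = c • Nchan X := by
  ext ⟨i, y⟩ ⟨j, y'⟩
  simp [Nchan, ptraceB, ← Finset.mul_sum]
  ring

lemma Nchan_one [DecidableEq m] [Nonempty n] : Nchan (1 : Matrix (m × n) (m × n) ℂ) = 1 := by
  ext ⟨i, y⟩ ⟨j, y'⟩
  by_cases hij : i = j <;> by_cases hy : y = y' <;>
    simp [Nchan, ptraceB, one_apply, hij, hy]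

variable [Fintype m]

lemma posSemidef_Nchan {X : Matrix (m × n) (m × n) ℂ} (hX : X.PosSemidef) :
    (Nchan X).PosSemidef :=
  ((posSemidef_ptraceB hX).kronecker .one).smul (by positivity)

lemma Nchan_mono {X Y : Matrix (m × n) (m × n) ℂ} (hXY : X ≤ Y) : Nchan X ≤ Nchan Y := by
  rw [Matrix.le_iff, ← Nchan_sub]
  exact posSemidef_Nchan hXY

lemma trace_Nchan [Nonempty n] (X : Matrix (m × n) (m × n) ℂ) : (Nchan X).trace = X.trace := by
  have : (Fintype.card n : ℂ) ≠ 0 := Nat.cast_ne_zero.2 Fintype.card_ne_zero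
  simp [Nchan, trace_kronecker, trace_ptraceB]
  field_simp

end PartialTrace

section Projection

variable {m n : Type*} [DecidableEq m] [DecidableEq n]

lemma isHermitian_projS0 (a0 : m) : (projS0 (h := n) a0).IsHermitian := by
  rw [IsHermitian, projS0, conjTranspose_kronecker, conjTranspose_one, conjTranspose_single,
    star_one]

lemma isStarProjection_projS0 [Fintype m] [Fintype n] (a0 : m) :
    IsStarProjection (projS0 (h := n) a0) where
  isIdempotentElem := by
    rw [IsIdempotentElem, projS0, ← mul_kronecker_mul, single_mul_single_same, one_mul, mul_one]
  isSelfAdjoint := isHermitian_projS0 a0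

lemma trace_projS0 [Fintype m] [Fintype n] (a0 : m) :
    (projS0 (h := n) a0).trace = Fintype.card n := by
  simp [projS0, trace_kronecker]

lemma one_sub_single_kronecker_one (a0 : m) :
    ((1 : Matrix m m ℂ) - single a0 a0 1) ⊗ₖ (1 : Matrix n n ℂ) = 1 - projS0 a0 := by
  ext ⟨i, x⟩ ⟨j, y⟩
  by_cases hij : i = j <;> by_cases hxy : x = y <;>
    simp [projS0, one_apply, hij, hxy]

variable [Fintype m] [Fintype n]

lemma Mchan_Dchan_of_projS0_mul_eq_zero (a0 : m) {ρ : Matrix (m × n) (m × n) ℂ}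
    (hρ : ρ.IsHermitian) (hsupp : projS0 a0 * ρ = 0) :
    Mchan a0 (Dchan a0 ρ) =
      (ρ.trace * (1 / ((Fintype.card m - 1) * Fintype.card n))) • (1 - projS0 a0) := by
  have hsupp' : ρ * projS0 a0 = 0 := by
    simpa [hρ.eq, (isHermitian_projS0 a0).eq] using congrArg conjTranspose hsupp
  have hD : Dchan a0 ρ = ρ := by
    simp [Dchan, sub_mul, mul_sub, hsupp, hsupp']
  rw [hD, Mchan, one_sub_single_kronecker_one]
  simp [sub_mul, hsupp]

lemma phiPrime_eq_of_projS0_mul_eq_zero {p q : Type*} [Fintype q] [DecidableEq q] (a0 : m)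
    (U : Matrix (p × q) (m × n) ℂ) {ρ : Matrix (m × n) (m × n) ℂ} (hρ : ρ.IsHermitian)
    (htr : ρ.trace = 1) (hsupp : projS0 a0 * ρ = 0) :
    PhiPrime a0 U ρ =
      (((Fintype.card m : ℝ) - 1) * Fintype.card n)⁻¹ •
        Nchan (U * (1 - projS0 (h := n) a0) * Uᴴ) := by
  rw [PhiPrime, Mchan_Dchan_of_projS0_mul_eq_zero a0 hρ hsupp, htr, Matrix.mul_smul,
    Matrix.smul_mul, Nchan_smul, one_mul, one_div, ← Complex.coe_smul]
  push_cast
  rfl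

end Projection

lemma mul_mul_conjTranspose_le_one {𝕜 m n : Type*} [RCLike 𝕜] [Fintype m] [Fintype n]
    [DecidableEq m] [DecidableEq n] {U : Matrix m n 𝕜} (hU : U * Uᴴ = 1) {Q : Matrix n n 𝕜}
    (hQ : Q ≤ 1) : U * Q * Uᴴ ≤ 1 := by
  rw [Matrix.le_iff, ← hU]
  convert (Matrix.le_iff.1 hQ).mul_mul_conjTranspose_same U using 1
  rw [Matrix.mul_sub, Matrix.sub_mul, Matrix.mul_one]

lemma mul_log_inv_le_negMulLog {x c : ℝ} (hx : 0 ≤ x) (hxc : x ≤ c) :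
    x * Real.log c⁻¹ ≤ Real.negMulLog x := by
  rcases hx.eq_or_lt with rfl | hpos
  · simp
  · rw [Real.negMulLog, Real.log_inv, mul_neg, neg_mul, neg_le_neg_iff]
    exact mul_le_mul_of_nonneg_left (Real.log_le_log hpos hxc) hpos.le

section Entropy

variable {n : Type*} [Fintype n] [DecidableEq n]

lemma Matrix.IsHermitian.eigenvalues_le_of_le_algebraMap {A : Matrix n n ℂ}
    (hA : A.IsHermitian) {c : ℝ} (h : A ≤ algebraMap ℝ _ c) (i : n) :
    hA.eigenvalues i ≤ c :=
  (le_algebraMap_iff_spectrum_le hA).1 h _ (hA.eigenvalues_mem_spectrum_real i)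

lemma logb_inv_le_vnEntropy {τ : Matrix n n ℂ} (hτ : τ.PosSemidef) (htr : τ.trace = 1)
    {c : ℝ} (hle : τ ≤ algebraMap ℝ _ c) :
    Real.logb 2 c⁻¹ ≤ vnEntropy τ := by
  have hsum : ∑ i, hτ.isHermitian.eigenvalues i = 1 :=
    RCLike.ofReal_injective (K := ℂ) <| by
      simpa [htr] using hτ.isHermitian.trace_eq_sum_eigenvalues.symm
  rw [vnEntropy, dif_pos hτ.isHermitian, Real.logb]
  gcongr
  calc Real.log c⁻¹ = ∑ i, hτ.isHermitian.eigenvalues i * Real.log c⁻¹ := by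
        rw [← Finset.sum_mul, hsum, one_mul]
    _ ≤ _ := Finset.sum_le_sum fun i _ => mul_log_inv_le_negMulLog (hτ.eigenvalues_nonneg i)
        (hτ.isHermitian.eigenvalues_le_of_le_algebraMap hle i)

end Entropy

lemma logb_le_vnEntropy_smul_Nchan {m n : Type*} [Fintype m] [DecidableEq m] [Fintype n]
    [DecidableEq n] {X : Matrix (m × n) (m × n) ℂ} (hX0 : X.PosSemidef) (hX1 : X ≤ 1)
    {N : ℝ} (hN : 0 < N) (htr : X.trace = N) :
    Real.logb 2 N ≤ vnEntropy (N⁻¹ • Nchan X) := by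
  have : Nonempty n :=
    (nonempty_prod.1 (nonempty_of_trace_ne_zero (htr ▸ Complex.ofReal_ne_zero.2 hN.ne'))).2
  have htr' : (N⁻¹ • Nchan X).trace = 1 := by
    rw [trace_smul, trace_Nchan, htr, Complex.real_smul, ← Complex.ofReal_mul,
      inv_mul_cancel₀ hN.ne', Complex.ofReal_one]
  have hle : N⁻¹ • Nchan X ≤ algebraMap ℝ _ N⁻¹ := by
    rw [Algebra.algebraMap_eq_smul_one, ← Nchan_one]
    exact smul_le_smul_of_nonneg_left (Nchan_mono hX1) (by positivity)
  simpa using logb_inv_le_vnEntropy ((posSemidef_Nchan hX0).smul (by positivity)) htr' hle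

lemma eight_le_of_three_le_logb {x : ℝ} (hx : 0 ≤ x) (h : 3 ≤ Real.logb 2 x) : 8 ≤ x := by
  rcases hx.eq_or_lt with rfl | hpos
  · norm_num at h
  · have := (Real.le_logb_iff_rpow_le one_lt_two hpos).1 h
    norm_num at this
    exact this

/-- With `m = log₂ A` we have `m / 2^(m - 3) = 8 m / A`, which dominates
`log₂ (A / (A - 1)) ≤ 1 / ((A - 1) ln 2)` as soon as `ln A ≥ 1`. -/
lemma logb_mul_sub_le_logb_sub_one_mul {A H : ℝ} (hA : 0 ≤ A) (hm : 3 ≤ Real.logb 2 A)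
    (hH : 0 < H) :
    Real.logb 2 (A * H) - Real.logb 2 A / (2 : ℝ) ^ (Real.logb 2 A - 3)
      ≤ Real.logb 2 ((A - 1) * H) := by
  have hA8 := eight_le_of_three_le_logb hA hm
  have hA0 : 0 < A := by linarith
  have hA1 : 0 < A - 1 := by linarith
  have hpow : (2 : ℝ) ^ (Real.logb 2 A - 3) = A / 8 := by
    rw [Real.rpow_sub two_pos, Real.rpow_logb two_pos (by norm_num) hA0]
    norm_num
  have hlogA : 1 ≤ Real.log A := by
    rw [Real.le_log_iff_exp_le hA0]
    linarith [Real.exp_one_lt_d9]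
  have hloss : Real.log A - Real.log (A - 1) ≤ Real.log A / (A / 8) := by
    rw [← Real.log_div hA0.ne' hA1.ne']
    calc Real.log (A / (A - 1)) ≤ A / (A - 1) - 1 := Real.log_le_sub_one_of_pos (by positivity)
      _ = 1 / (A - 1) := by field_simp; ring
      _ ≤ 8 / A := by rw [div_le_div_iff₀ hA1 hA0]; linarith
      _ ≤ 8 * Real.log A / A := by gcongr; linarith
      _ = Real.log A / (A / 8) := by field_simp
  have hlog2 : 0 < Real.log 2 := Real.log_pos one_lt_two
  calc Real.logb 2 (A * H) - Real.logb 2 A / (2 : ℝ) ^ (Real.logb 2 A - 3)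
      = Real.logb 2 ((A - 1) * H) +
          (Real.log A - Real.log (A - 1) - Real.log A / (A / 8)) / Real.log 2 := by
        rw [hpow, Real.logb_mul hA0.ne' hH.ne', Real.logb_mul hA1.ne' hH.ne']
        unfold Real.logb
        ring
    _ ≤ Real.logb 2 ((A - 1) * H) := by
        linarith [div_nonpos_of_nonpos_of_nonneg (sub_nonpos.2 hloss) hlog2.le]

theorem phiPrime_entropy_S0perp_general (a0 : a) (U : Matrix (k × b) (a × h) ℂ)
    (hU : U * Uᴴ = 1) (hU' : Uᴴ * U = 1)
    (hm : 3 ≤ Real.logb 2 (Fintype.card a))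
    (ρ : Matrix (a × h) (a × h) ℂ) (hρ : IsDensity ρ)
    (hsupp : projS0 (h := h) a0 * ρ = 0) :
    Real.logb 2 ((Fintype.card a : ℝ) * (Fintype.card h : ℝ)) -
        Real.logb 2 (Fintype.card a) /
          (2 : ℝ) ^ (Real.logb 2 (Fintype.card a) - 3)
      ≤ vnEntropy (PhiPrime a0 U ρ) := by
  obtain ⟨hρ0, hρ1⟩ := hρ
  have : Nonempty h := (nonempty_prod.1 (nonempty_of_trace_ne_zero (hρ1 ▸ one_ne_zero))).2
  have hA := eight_le_of_three_le_logb (Nat.cast_nonneg _) hm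
  have hH : (0 : ℝ) < Fintype.card h := Nat.cast_pos.2 Fintype.card_pos
  have hQ := (isStarProjection_projS0 (n := h) a0).one_sub
  rw [phiPrime_eq_of_projS0_mul_eq_zero a0 U hρ0.isHermitian hρ1 hsupp]
  refine (logb_mul_sub_le_logb_sub_one_mul (Nat.cast_nonneg _) hm hH).trans
    (logb_le_vnEntropy_smul_Nchan (hQ.nonneg.posSemidef.mul_mul_conjTranspose_same U)
      (mul_mul_conjTranspose_le_one hU hQ.le_one) (mul_pos (by linarith) hH) ?_)
  rw [trace_mul_cycle, hU', one_mul, trace_sub, trace_one, trace_projS0, Fintype.card_prod]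
  push_cast
  ring

/-- If `dim A ≥ dim H` and `m = log₂ (dim A) ≥ 3`, then on density operators supported on
`S₀⊥` the output entropy of `Φ'` satisfies
`S(Φ'(ρ)) ≥ log₂(dim A · dim H) − m / 2^(m−3)`. -/
theorem phiPrime_entropy_S0perp (a0 : a) (U : Matrix (k × b) (a × h) ℂ)
    (hU : U * Uᴴ = 1) (hU' : Uᴴ * U = 1)
    (hdim : Fintype.card h ≤ Fintype.card a)
    (hm : 3 ≤ Real.logb 2 (Fintype.card a))
    (ρ : Matrix (a × h) (a × h) ℂ) (hρ : IsDensity ρ)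
    (hsupp : projS0 (h := h) a0 * ρ = 0) :
    Real.logb 2 ((Fintype.card a : ℝ) * (Fintype.card h : ℝ)) -
        Real.logb 2 (Fintype.card a) /
          (2 : ℝ) ^ (Real.logb 2 (Fintype.card a) - 3)
      ≤ vnEntropy (PhiPrime a0 U ρ) :=
  phiPrime_entropy_S0perp_general a0 U hU hU' hm ρ hρ hsupp
end
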